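/- arXiv:2601.10486 — 3 statements merged into one kernel-verified Lean document; each statement's English description precedes it below -/
import Mathlib

section
/- (Lemma 4.1, weighted summability of the interaction coefficients) Fix d ≥ 1, an integer L ≥ 2, a symmetric V : Λ → ℝ, and θ ∈ {−1,+1}. Then for every p ≥ 0 and every i ∈ {1,…,8}: Σ_{y,y'∈Λ} (Π_{j=1}^d ⟨y_j⟩⟨y'_j⟩)^p · (sup_{k∈Λ*} |v_i(k,y)|) · |w_i(y')| ≤ (2^{pd} + 3) ‖V̂‖_p². -/
/-!
Fourier inversion on `Λ` turns `‖V̂‖_p` into `S = Σ_y W(y) |V(y)|` with `W(y) = Π_j ⟨y_j⟩^p`.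
Since `y ∈ Λ` is the centered representative of its class, `|y_j| ≤ |x_j| + |(y - x)_j mod L|`,
so `⟨y_j⟩ ≤ 2 ⟨x_j⟩ ⟨(y - x)_j mod L⟩` and `W` is submultiplicative up to `2^{pd}`; this gives the
weighted Young bound `Σ_y W(y) |(V ∗ V)(y)| ≤ 2^{pd} S²`. The double sum factorizes as
`(Σ_y W(y) sup_k |v_i(k,y)|) (Σ_{y'} W(y') |w_i(y')|)`. For `i ≤ 7` the second factor is `1`, and
`|V̂(k)| ≤ Σ |V| ≤ S` bounds the first by `S² + 2S² + 2^{pd} S²`; for `i = 8` the product is at most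
`2S · S`.
-/

noncomputable section

namespace KWP

open MeasureTheory Classical

/-- regularized absolute value `⟨r⟩ = √(1+r²)` -/
def reg (r : ℝ) : ℝ := Real.sqrt (1 + r^2)

/-- `e^{2πi t}` -/
def eTwoPiI (t : ℝ) : ℂ := Complex.exp (2*Real.pi*Complex.I*(t:ℂ))

/-- one-dimensional centered periodic lattice of side `L`: representatives in `(-L/2, L/2]` -/
def Lambda1 (L : ℕ) : Finset ℤ :=
  (Finset.Icc (-(L:ℤ)) (L:ℤ)).filter (fun x => -(L:ℤ) < 2*x ∧ 2*x ≤ (L:ℤ))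

/-- the lattice `Λ = Λ₁^d` -/
def LambdaSet (L d : ℕ) : Finset (Fin d → ℤ) :=
  Fintype.piFinset (fun _ => Lambda1 L)

/-- centered representative of `z` modulo `L` -/
def cmod (L : ℕ) (z : ℤ) : ℤ :=
  if 2*(z % (L:ℤ)) ≤ (L:ℤ) then z % (L:ℤ) else z % (L:ℤ) - (L:ℤ)

/-- componentwise centered representative modulo `Λ` -/
def cmodVec (L : ℕ) {d : ℕ} (z : Fin d → ℤ) : Fin d → ℤ := fun i => cmod L (z i)

/-- dual lattice point `m/L ∈ Λ*` associated to `m ∈ Λ` -/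
def dpt (L : ℕ) {d : ℕ} (m : Fin d → ℤ) : Fin d → ℝ := fun i => (m i : ℝ) / (L:ℝ)

/-- membership in the dual lattice `Λ*` -/
def memDual (L d : ℕ) (k : Fin d → ℝ) : Prop := ∃ m ∈ LambdaSet L d, k = dpt L m

/-- normalized sum over the dual lattice, `∫_{Λ*} dk f(k)` (ℂ-valued) -/
def dInt (L d : ℕ) (f : (Fin d → ℝ) → ℂ) : ℂ :=
  ((L:ℂ)^d)⁻¹ * ∑ m ∈ LambdaSet L d, f (dpt L m)

/-- normalized sum over the dual lattice, `∫_{Λ*} dk f(k)` (ℝ-valued) -/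
def dIntR (L d : ℕ) (f : (Fin d → ℝ) → ℝ) : ℝ :=
  ((L:ℝ)^d)⁻¹ * ∑ m ∈ LambdaSet L d, f (dpt L m)

/-- `k · y` for `k ∈ ℝ^d`, `y ∈ ℤ^d` -/
def dotIZ {d : ℕ} (k : Fin d → ℝ) (y : Fin d → ℤ) : ℝ := ∑ i, k i * (y i : ℝ)

/-- discrete Fourier transform `f̂(k) = Σ_{y∈Λ} e^{-2πik·y} f(y)` -/
def dft (L d : ℕ) (f : (Fin d → ℤ) → ℂ) (k : Fin d → ℝ) : ℂ :=
  ∑ y ∈ LambdaSet L d, eTwoPiI (-(dotIZ k y)) * f y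

/-- inverse discrete Fourier transform `ǧ(x) = ∫_{Λ*}dk g(k) e^{2πik·x}` -/
def idft (L d : ℕ) (g : (Fin d → ℝ) → ℂ) (x : Fin d → ℤ) : ℂ :=
  dInt L d (fun k => g k * eTwoPiI (dotIZ k x))

/-- Sobolev-type norm `‖g‖_p = Σ_{y∈Λ} (Π_j ⟨y_j⟩^p) |ǧ(y)|` -/
def sobolevNorm (L d : ℕ) (p : ℝ) (g : (Fin d → ℝ) → ℂ) : ℝ :=
  ∑ y ∈ LambdaSet L d, (∏ j, reg (y j : ℝ) ^ p) * ‖idft L d g y‖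

/-- Sobolev-type sup norm `|||g|||_p = sup_{y∈Λ} (Π_j ⟨y_j⟩^p) |ǧ(y)|` -/
def sobolevSupNorm (L d : ℕ) (p : ℝ) (g : (Fin d → ℝ) → ℂ) : ℝ :=
  sSup { v : ℝ | ∃ y ∈ LambdaSet L d, v = (∏ j, reg (y j : ℝ) ^ p) * ‖idft L d g y‖ }

/-- sup norm over the dual lattice `Λ*` -/
def dualSupNorm (L d : ℕ) (f : (Fin d → ℝ) → ℝ) : ℝ :=
  sSup { v : ℝ | ∃ m ∈ LambdaSet L d, v = |f (dpt L m)| }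

/-- Fourier transform of the interaction potential (ℂ-valued) -/
def VhatC (L d : ℕ) (V : (Fin d → ℤ) → ℝ) (k : Fin d → ℝ) : ℂ :=
  dft L d (fun y => (V y : ℂ)) k

/-- Fourier transform of the symmetric interaction potential (real part) -/
def VhatRe (L d : ℕ) (V : (Fin d → ℤ) → ℝ) (k : Fin d → ℝ) : ℝ := (VhatC L d V k).re

/-- periodic convolution `(V∗V)(y) = Σ_{x∈Λ} V(x)V(y-x)` -/
def convVV (L d : ℕ) (V : (Fin d → ℤ) → ℝ) (y : Fin d → ℤ) : ℝ :=
  ∑ x ∈ LambdaSet L d, V x * V (cmodVec L (fun i => y i - x i))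

/-- `𝒱(k,y) = 𝟙(y=0) V̂(k)² + 2θ V̂(k) V(y) + (V∗V)(y)` -/
def calV (L d : ℕ) (θ : ℝ) (V : (Fin d → ℤ) → ℝ) (k : Fin d → ℝ) (y : Fin d → ℤ) : ℝ :=
  (if y = 0 then (1:ℝ) else 0) * (VhatRe L d V k)^2 + 2*θ*(VhatRe L d V k)*(V y) + convVV L d V y

/-- the interaction coefficients `v_i(k,y)` -/
def vcoef (L d : ℕ) (θ : ℝ) (V : (Fin d → ℤ) → ℝ) (i : ℕ) (k : Fin d → ℝ) (y : Fin d → ℤ) : ℝ :=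
  if i ≤ 5 then calV L d θ V k y else if i ≤ 7 then convVV L d V y else 2 * V y

/-- the interaction coefficients `w_i(y')` -/
def wcoef {d : ℕ} (V : (Fin d → ℤ) → ℝ) (i : ℕ) (y' : Fin d → ℤ) : ℝ :=
  if i ≤ 7 then (if y' = 0 then (1:ℝ) else 0) else V y'

open Finset

section Lattice

variable {L : ℕ}

lemma mem_Lambda1 {z : ℤ} : z ∈ Lambda1 L ↔ -(L:ℤ) < 2 * z ∧ 2 * z ≤ L := by
  simp only [Lambda1, mem_filter, mem_Icc]
  omega

lemma mem_LambdaSet {d : ℕ} {y : Fin d → ℤ} : y ∈ LambdaSet L d ↔ ∀ j, y j ∈ Lambda1 L :=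
  Fintype.mem_piFinset

lemma zero_mem_LambdaSet (hL : 0 < L) (d : ℕ) : (0 : Fin d → ℤ) ∈ LambdaSet L d :=
  mem_LambdaSet.2 fun _ => mem_Lambda1.2 (by rw [Pi.zero_apply]; omega)

lemma cmod_modEq (z : ℤ) : cmod L z ≡ z [ZMOD L] := by
  unfold cmod
  split_ifs
  · exact Int.mod_modEq z L
  · exact ((Int.mod_modEq z L).sub_right L).trans (Int.sub_modulus_modEq_iff.2 rfl)

lemma cmod_congr {z z' : ℤ} (h : z ≡ z' [ZMOD L]) : cmod L z = cmod L z' := by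
  unfold cmod
  rw [h]

lemma cmod_mem_Lambda1 (hL : 0 < L) (z : ℤ) : cmod L z ∈ Lambda1 L := by
  have h0 := Int.emod_nonneg z (by omega : (L:ℤ) ≠ 0)
  have h1 := Int.emod_lt_of_pos z (by omega : (0:ℤ) < L)
  rw [mem_Lambda1]
  unfold cmod
  split_ifs <;> omega

lemma cmod_eq_self {z : ℤ} (hz : z ∈ Lambda1 L) : cmod L z = z := by
  rw [mem_Lambda1] at hz
  have hz' : z % L = if 0 ≤ z then z else z + L := by
    split_ifs with h
    · exact Int.emod_eq_of_lt h (by omega)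
    · rw [← Int.add_emod_right, Int.emod_eq_of_lt (by omega) (by omega)]
  unfold cmod
  rw [hz']
  split_ifs <;> omega

lemma eq_of_modEq_of_mem_Lambda1 {a b : ℤ} (ha : a ∈ Lambda1 L) (hb : b ∈ Lambda1 L)
    (h : a ≡ b [ZMOD L]) : a = b := by
  rw [← cmod_eq_self ha, ← cmod_eq_self hb, cmod_congr h]

lemma abs_le_abs_of_mem_Lambda1_of_modEq {y z : ℤ} (hy : y ∈ Lambda1 L)
    (h : y ≡ z [ZMOD L]) : |y| ≤ |z| := by
  obtain ⟨c, hc⟩ := Int.modEq_iff_dvd.1 h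
  rw [mem_Lambda1] at hy
  rcases lt_trichotomy c 0 with hc0 | rfl | hc0
  · have : (L:ℤ) * c ≤ -L := by nlinarith
    rw [← sq_le_sq]
    nlinarith
  · rw [mul_zero, sub_eq_zero] at hc
    rw [hc]
  · have : (L:ℤ) ≤ L * c := by nlinarith
    rw [← sq_le_sq]
    nlinarith

lemma sum_Lambda1_intCast [NeZero L] {M : Type*} [AddCommMonoid M] (f : ZMod L → M) :
    ∑ m ∈ Lambda1 L, f m = ∑ z : ZMod L, f z := by
  refine sum_nbij' (fun m => (m : ZMod L)) (fun z => cmod L z.val) (by simp)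
    (fun z _ => cmod_mem_Lambda1 (NeZero.pos L) _) (fun m hm => ?_) (fun z _ => ?_) (fun _ _ => rfl)
  · have hval : ((m : ZMod L).val : ℤ) ≡ m [ZMOD L] := by
      rw [ZMod.val_intCast]
      exact Int.mod_modEq m L
    rw [cmod_congr hval, cmod_eq_self hm]
  · rw [(ZMod.intCast_eq_intCast_iff _ (z.val : ℤ) L).2 (cmod_modEq _)]
    simp

lemma sum_cmodVec_sub {d : ℕ} (hL : 0 < L) (x : Fin d → ℤ) {M : Type*} [AddCommMonoid M]
    (g : (Fin d → ℤ) → M) :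
    ∑ y ∈ LambdaSet L d, g (cmodVec L fun j => y j - x j) = ∑ c ∈ LambdaSet L d, g c := by
  refine sum_nbij' (fun y => cmodVec L fun j => y j - x j) (fun c => cmodVec L fun j => x j + c j)
    (fun y _ => mem_LambdaSet.2 fun j => cmod_mem_Lambda1 hL _)
    (fun c _ => mem_LambdaSet.2 fun j => cmod_mem_Lambda1 hL _) (fun y hy => ?_) (fun c hc => ?_)
    (fun _ _ => rfl)
  · funext j
    simp only [cmodVec]
    rw [cmod_congr (((cmod_modEq _).add_left (x j)).trans (by rw [add_sub_cancel])),
      cmod_eq_self (mem_LambdaSet.1 hy j)]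
  · funext j
    simp only [cmodVec]
    rw [cmod_congr (((cmod_modEq _).sub_right (x j)).trans (by rw [add_sub_cancel_left])),
      cmod_eq_self (mem_LambdaSet.1 hc j)]

end Lattice

section Fourier

variable {L d : ℕ}

lemma eTwoPiI_add (s t : ℝ) : eTwoPiI (s + t) = eTwoPiI s * eTwoPiI t := by
  simp only [eTwoPiI, Complex.ofReal_add, mul_add, Complex.exp_add]

lemma eTwoPiI_sum {ι : Type*} (s : Finset ι) (g : ι → ℝ) :
    eTwoPiI (∑ i ∈ s, g i) = ∏ i ∈ s, eTwoPiI (g i) := by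
  simp only [eTwoPiI, Complex.ofReal_sum, mul_sum, Complex.exp_sum]

lemma norm_eTwoPiI (t : ℝ) : ‖eTwoPiI t‖ = 1 := by
  rw [eTwoPiI, show 2 * (Real.pi : ℂ) * Complex.I * t = ((2 * Real.pi * t : ℝ) : ℂ) * Complex.I by
    push_cast; ring]
  exact Complex.norm_exp_ofReal_mul_I _

lemma eTwoPiI_intCast_mul_div [NeZero L] (m a : ℤ) :
    eTwoPiI (m * a / L) = ZMod.stdAddChar ((m : ZMod L) * (a : ZMod L)) := by
  rw [← Int.cast_mul, ← Int.cast_mul, ZMod.stdAddChar_coe, eTwoPiI]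
  push_cast
  ring_nf

lemma sum_Lambda1_eTwoPiI [NeZero L] (a : ℤ) :
    ∑ m ∈ Lambda1 L, eTwoPiI (m * a / L) = if (a : ZMod L) = 0 then (L : ℂ) else 0 := by
  simp_rw [eTwoPiI_intCast_mul_div]
  rw [sum_Lambda1_intCast (fun z => ZMod.stdAddChar (z * (a : ZMod L))),
    AddChar.sum_mulShift _ (ZMod.isPrimitive_stdAddChar L)]
  simp

lemma dotIZ_dpt (m z : Fin d → ℤ) : dotIZ (dpt L m) z = ∑ j, (m j : ℝ) * z j / L := by
  simp only [dotIZ, dpt, div_mul_eq_mul_div]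

lemma dotIZ_sub (k : Fin d → ℝ) (x y : Fin d → ℤ) : dotIZ k (x - y) = dotIZ k x - dotIZ k y := by
  simp only [dotIZ, Pi.sub_apply, Int.cast_sub, mul_sub, sum_sub_distrib]

lemma sum_LambdaSet_eTwoPiI_dotIZ [NeZero L] (z : Fin d → ℤ) :
    ∑ m ∈ LambdaSet L d, eTwoPiI (dotIZ (dpt L m) z) =
      if ∀ j, (z j : ZMod L) = 0 then (L : ℂ) ^ d else 0 := by
  simp_rw [dotIZ_dpt, eTwoPiI_sum]
  rw [LambdaSet, sum_prod_piFinset (Lambda1 L) fun j mj => eTwoPiI (mj * z j / L)]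
  simp_rw [sum_Lambda1_eTwoPiI, prod_ite_zero, prod_const, card_univ, Fintype.card_fin]
  simp

lemma forall_intCast_sub_eq_zero_iff {x y : Fin d → ℤ} (hx : x ∈ LambdaSet L d) (hy : y ∈ LambdaSet L d) :
    (∀ j, ((x - y) j : ZMod L) = 0) ↔ y = x := by
  refine ⟨fun h => funext fun j => ?_, fun h j => by simp [h]⟩
  refine eq_of_modEq_of_mem_Lambda1 (mem_LambdaSet.1 hy j) (mem_LambdaSet.1 hx j) ?_
  rw [← ZMod.intCast_eq_intCast_iff, eq_comm, ← sub_eq_zero, ← Int.cast_sub]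
  exact h j

theorem idft_dft [NeZero L] (f : (Fin d → ℤ) → ℂ) {x : Fin d → ℤ} (hx : x ∈ LambdaSet L d) :
    idft L d (dft L d f) x = f x := by
  have hchar : ∀ y ∈ LambdaSet L d,
      ∑ m ∈ LambdaSet L d, eTwoPiI (dotIZ (dpt L m) (x - y)) = if y = x then (L : ℂ) ^ d else 0 :=
    fun y hy => by rw [sum_LambdaSet_eTwoPiI_dotIZ, if_congr (forall_intCast_sub_eq_zero_iff hx hy) rfl rfl]
  calc idft L d (dft L d f) x
      = ((L : ℂ) ^ d)⁻¹ * ∑ y ∈ LambdaSet L d,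
          f y * ∑ m ∈ LambdaSet L d, eTwoPiI (dotIZ (dpt L m) (x - y)) := by
        simp only [idft, dInt, dft, sum_mul]
        rw [sum_comm]
        refine congrArg _ (sum_congr rfl fun y _ => ?_)
        rw [mul_sum]
        refine sum_congr rfl fun m _ => ?_
        rw [dotIZ_sub, sub_eq_neg_add, eTwoPiI_add]
        ring
    _ = f x := by
        rw [sum_congr rfl fun y hy => by rw [hchar y hy]]
        have hL : (L : ℂ) ^ d ≠ 0 := pow_ne_zero _ (Nat.cast_ne_zero.2 (NeZero.ne L))
        simp only [mul_ite, mul_zero, sum_ite_eq', hx, if_true]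
        rw [mul_comm (f x), inv_mul_cancel_left₀ hL]

end Fourier

section Weight

variable {L d : ℕ} {p : ℝ}

lemma reg_nonneg (r : ℝ) : 0 ≤ reg r := Real.sqrt_nonneg _

lemma one_le_reg (r : ℝ) : 1 ≤ reg r := Real.one_le_sqrt.2 (by nlinarith [sq_nonneg r])

lemma reg_le_two_mul_reg_mul_reg {a b c : ℝ} (h : |a| ≤ |b| + |c|) :
    reg a ≤ 2 * reg b * reg c := by
  rw [reg, Real.sqrt_le_iff]
  refine ⟨mul_nonneg (mul_nonneg zero_le_two (reg_nonneg b)) (reg_nonneg c), ?_⟩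
  rw [mul_pow, mul_pow, reg, reg, Real.sq_sqrt (by positivity), Real.sq_sqrt (by positivity)]
  have ha : a ^ 2 ≤ (|b| + |c|) ^ 2 := sq_le_sq' (by linarith [neg_abs_le a]) (le_abs_self a |>.trans h)
  nlinarith [sq_abs b, sq_abs c, sq_nonneg (|b| - |c|), sq_nonneg (b * c)]

lemma reg_le_two_mul_reg_mul_reg_cmod {y : ℤ} (hy : y ∈ Lambda1 L) (x : ℤ) :
    reg y ≤ 2 * reg x * reg (cmod L (y - x)) := by
  apply reg_le_two_mul_reg_mul_reg
  have hmod : y ≡ x + cmod L (y - x) [ZMOD L] :=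
    (((cmod_modEq _).add_left x).trans (by rw [add_sub_cancel])).symm
  have := (abs_le_abs_of_mem_Lambda1_of_modEq hy hmod).trans (abs_add_le _ _)
  exact_mod_cast this

def weight (p : ℝ) (y : Fin d → ℤ) : ℝ := ∏ j, reg (y j : ℝ) ^ p

lemma weight_nonneg (p : ℝ) (y : Fin d → ℤ) : 0 ≤ weight p y :=
  prod_nonneg fun _ _ => Real.rpow_nonneg (reg_nonneg _) p

lemma one_le_weight (hp : 0 ≤ p) (y : Fin d → ℤ) : 1 ≤ weight p y :=
  Finset.one_le_prod fun _ _ => Real.one_le_rpow (one_le_reg _) hp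

lemma weight_zero (p : ℝ) : weight p (0 : Fin d → ℤ) = 1 := by
  simp [weight, reg]

lemma rpow_prod_reg_mul_reg (p : ℝ) (y y' : Fin d → ℤ) :
    (∏ j, reg (y j : ℝ) * reg (y' j : ℝ)) ^ p = weight p y * weight p y' := by
  rw [prod_mul_distrib, Real.mul_rpow (prod_nonneg fun _ _ => reg_nonneg _)
    (prod_nonneg fun _ _ => reg_nonneg _), weight, weight,
    Real.finsetProd_rpow _ _ (fun _ _ => reg_nonneg _), Real.finsetProd_rpow _ _ (fun _ _ => reg_nonneg _)]

lemma weight_le_two_rpow_mul_weight_mul_weight (hp : 0 ≤ p) {y : Fin d → ℤ}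
    (hy : y ∈ LambdaSet L d) (x : Fin d → ℤ) :
    weight p y ≤ 2 ^ (p * d) * weight p x * weight p (cmodVec L fun j => y j - x j) := by
  calc weight p y
      ≤ ∏ j, 2 ^ p * (reg (x j : ℝ) ^ p * reg (cmod L (y j - x j) : ℝ) ^ p) := by
        refine prod_le_prod (fun _ _ => Real.rpow_nonneg (reg_nonneg _) p) fun j _ => ?_
        rw [← Real.mul_rpow (reg_nonneg _) (reg_nonneg _),
          ← Real.mul_rpow zero_le_two (mul_nonneg (reg_nonneg _) (reg_nonneg _)), ← mul_assoc]
        exact Real.rpow_le_rpow (reg_nonneg _)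
          (reg_le_two_mul_reg_mul_reg_cmod (mem_LambdaSet.1 hy j) _) hp
    _ = 2 ^ (p * d) * weight p x * weight p (cmodVec L fun j => y j - x j) := by
        rw [prod_mul_distrib, prod_mul_distrib, prod_const, card_univ, Fintype.card_fin,
          ← Real.rpow_natCast, ← Real.rpow_mul zero_le_two, mul_assoc]
        rfl

theorem sum_weight_mul_abs_conv_le (hL : 0 < L) (hp : 0 ≤ p) (f g : (Fin d → ℤ) → ℝ) :
    ∑ y ∈ LambdaSet L d, weight p y * |∑ x ∈ LambdaSet L d, f x * g (cmodVec L fun j => y j - x j)|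
      ≤ 2 ^ (p * d) * (∑ x ∈ LambdaSet L d, weight p x * |f x|) *
          ∑ c ∈ LambdaSet L d, weight p c * |g c| := by
  calc _ ≤ ∑ y ∈ LambdaSet L d, ∑ x ∈ LambdaSet L d, 2 ^ (p * d) * (weight p x * |f x|) *
          (weight p (cmodVec L fun j => y j - x j) * |g (cmodVec L fun j => y j - x j)|) := by
        refine sum_le_sum fun y hy => ?_
        calc _ ≤ weight p y *
              ∑ x ∈ LambdaSet L d, |f x| * |g (cmodVec L fun j => y j - x j)| := by
              refine mul_le_mul_of_nonneg_left ?_ (weight_nonneg p y)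
              simpa only [abs_mul] using abs_sum_le_sum_abs
                (fun x => f x * g (cmodVec L fun j => y j - x j)) (LambdaSet L d)
          _ ≤ _ := by
              rw [mul_sum]
              refine sum_le_sum fun x _ => ?_
              calc _ ≤ 2 ^ (p * d) * weight p x * weight p (cmodVec L fun j => y j - x j) *
                    (|f x| * |g (cmodVec L fun j => y j - x j)|) :=
                    mul_le_mul_of_nonneg_right
                      (weight_le_two_rpow_mul_weight_mul_weight hp hy x) (by positivity)
                _ = _ := by ring
    _ = ∑ x ∈ LambdaSet L d, 2 ^ (p * d) * (weight p x * |f x|) *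
          ∑ c ∈ LambdaSet L d, weight p c * |g c| := by
        rw [sum_comm]
        refine sum_congr rfl fun x _ => ?_
        rw [← mul_sum, sum_cmodVec_sub hL x fun c => weight p c * |g c|]
    _ = _ := by rw [← sum_mul, ← mul_sum]

end Weight

section Coefficients

variable {L d : ℕ} {p : ℝ}

lemma sobolevNorm_VhatC [NeZero L] (p : ℝ) (V : (Fin d → ℤ) → ℝ) :
    sobolevNorm L d p (VhatC L d V) = ∑ y ∈ LambdaSet L d, weight p y * |V y| := by
  refine sum_congr rfl fun y hy => ?_
  have hVhat : VhatC L d V = dft L d fun y => (V y : ℂ) := rfl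
  rw [hVhat, idft_dft _ hy, Complex.norm_real, Real.norm_eq_abs]
  rfl

lemma sum_abs_le_sum_weight_mul_abs (hp : 0 ≤ p) (V : (Fin d → ℤ) → ℝ) :
    ∑ y ∈ LambdaSet L d, |V y| ≤ ∑ y ∈ LambdaSet L d, weight p y * |V y| :=
  sum_le_sum fun y _ => le_mul_of_one_le_left (abs_nonneg _) (one_le_weight hp y)

lemma abs_VhatRe_le (V : (Fin d → ℤ) → ℝ) (k : Fin d → ℝ) :
    |VhatRe L d V k| ≤ ∑ y ∈ LambdaSet L d, |V y| :=
  calc |VhatRe L d V k| ≤ ‖VhatC L d V k‖ := Complex.abs_re_le_norm _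
    _ ≤ ∑ y ∈ LambdaSet L d, ‖eTwoPiI (-dotIZ k y) * (V y : ℂ)‖ := norm_sum_le _ _
    _ = ∑ y ∈ LambdaSet L d, |V y| := by
        simp only [norm_mul, norm_eTwoPiI, one_mul, Complex.norm_real, Real.norm_eq_abs]

lemma abs_calV_le {θ : ℝ} (hθ : |θ| ≤ 1) (V : (Fin d → ℤ) → ℝ) (k : Fin d → ℝ)
    (y : Fin d → ℤ) :
    |calV L d θ V k y| ≤ (if y = 0 then (∑ z ∈ LambdaSet L d, |V z|) ^ 2 else 0) +
      2 * (∑ z ∈ LambdaSet L d, |V z|) * |V y| + |convVV L d V y| := by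
  have hR := abs_VhatRe_le (L := L) V k
  have hsq : |(if y = 0 then (1 : ℝ) else 0) * VhatRe L d V k ^ 2| ≤
      if y = 0 then (∑ z ∈ LambdaSet L d, |V z|) ^ 2 else 0 := by
    split_ifs
    · rw [one_mul, abs_pow]
      exact pow_le_pow_left₀ (abs_nonneg _) hR 2
    · simp
  have hlin : |2 * θ * VhatRe L d V k * V y| ≤ 2 * (∑ z ∈ LambdaSet L d, |V z|) * |V y| := by
    rw [abs_mul, abs_mul, abs_mul, abs_two, mul_assoc 2]
    have := mul_le_mul hθ hR (abs_nonneg _) zero_le_one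
    rw [one_mul] at this
    gcongr
  exact (abs_add_three _ _ _).trans (by gcongr)

lemma abs_vcoef_le_of_le_seven {θ : ℝ} (hθ : |θ| ≤ 1) (V : (Fin d → ℤ) → ℝ) {i : ℕ} (hi : i ≤ 7)
    (k : Fin d → ℝ) (y : Fin d → ℤ) :
    |vcoef L d θ V i k y| ≤ (if y = 0 then (∑ z ∈ LambdaSet L d, |V z|) ^ 2 else 0) +
      2 * (∑ z ∈ LambdaSet L d, |V z|) * |V y| + |convVV L d V y| := by
  by_cases h5 : i ≤ 5
  · rw [vcoef, if_pos h5]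
    exact abs_calV_le hθ V k y
  · rw [vcoef, if_neg h5, if_pos hi]
    have hsq : 0 ≤ if y = 0 then (∑ z ∈ LambdaSet L d, |V z|) ^ 2 else 0 := by
      split_ifs <;> positivity
    have hN : 0 ≤ ∑ z ∈ LambdaSet L d, |V z| := sum_nonneg fun _ _ => abs_nonneg _
    nlinarith [abs_nonneg (V y)]

lemma dualSupNorm_le (hL : 0 < L) {f : (Fin d → ℝ) → ℝ} {B : ℝ} (h : ∀ k, |f k| ≤ B) :
    dualSupNorm L d f ≤ B :=
  csSup_le ⟨_, 0, zero_mem_LambdaSet hL d, rfl⟩ (by rintro _ ⟨m, -, rfl⟩; exact h _)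

lemma sum_weight_mul_ite_eq_zero (hL : 0 < L) (p A : ℝ) :
    ∑ y ∈ LambdaSet L d, weight p y * (if y = 0 then A else 0) = A := by
  simp [mul_ite, weight_zero, zero_mem_LambdaSet hL]

lemma sum_weight_mul_dualSupNorm_vcoef_le_of_le_seven (hL : 0 < L) (hp : 0 ≤ p) {θ : ℝ}
    (hθ : |θ| ≤ 1) (V : (Fin d → ℤ) → ℝ) {i : ℕ} (hi : i ≤ 7) :
    ∑ y ∈ LambdaSet L d, weight p y * dualSupNorm L d (fun k => vcoef L d θ V i k y) ≤
      (∑ z ∈ LambdaSet L d, |V z|) ^ 2 +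
        2 * (∑ z ∈ LambdaSet L d, |V z|) * (∑ y ∈ LambdaSet L d, weight p y * |V y|) +
        2 ^ (p * d) * (∑ y ∈ LambdaSet L d, weight p y * |V y|) ^ 2 :=
  calc _ ≤ ∑ y ∈ LambdaSet L d, weight p y *
          ((if y = 0 then (∑ z ∈ LambdaSet L d, |V z|) ^ 2 else 0) +
            2 * (∑ z ∈ LambdaSet L d, |V z|) * |V y| + |convVV L d V y|) :=
        sum_le_sum fun y _ => mul_le_mul_of_nonneg_left
          (dualSupNorm_le hL fun k => abs_vcoef_le_of_le_seven hθ V hi k y) (weight_nonneg p y)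
    _ = (∑ z ∈ LambdaSet L d, |V z|) ^ 2 +
          2 * (∑ z ∈ LambdaSet L d, |V z|) * (∑ y ∈ LambdaSet L d, weight p y * |V y|) +
          ∑ y ∈ LambdaSet L d, weight p y * |convVV L d V y| := by
        simp only [mul_add, sum_add_distrib, sum_weight_mul_ite_eq_zero hL, mul_sum]
        congr 2
        exact sum_congr rfl fun y _ => by ring
    _ ≤ _ := by
        have hconv : ∑ y ∈ LambdaSet L d, weight p y * |convVV L d V y| ≤
            2 ^ (p * d) * (∑ y ∈ LambdaSet L d, weight p y * |V y|) ^ 2 := by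
          rw [sq, ← mul_assoc]
          exact sum_weight_mul_abs_conv_le hL hp V V
        linarith

lemma sum_weight_mul_dualSupNorm_vcoef_le_of_seven_lt (hL : 0 < L) (θ : ℝ)
    (V : (Fin d → ℤ) → ℝ) {i : ℕ} (hi : 7 < i) :
    ∑ y ∈ LambdaSet L d, weight p y * dualSupNorm L d (fun k => vcoef L d θ V i k y) ≤
      2 * ∑ y ∈ LambdaSet L d, weight p y * |V y| := by
  rw [mul_sum]
  refine sum_le_sum fun y _ => ?_
  have hv : ∀ k, |vcoef L d θ V i k y| ≤ 2 * |V y| := fun k => by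
    rw [vcoef, if_neg (by omega), if_neg (by omega), abs_mul, abs_two]
  calc _ ≤ weight p y * (2 * |V y|) :=
        mul_le_mul_of_nonneg_left (dualSupNorm_le hL hv) (weight_nonneg p y)
    _ = _ := by ring

lemma sum_weight_mul_abs_wcoef_of_le_seven (hL : 0 < L) (p : ℝ) (V : (Fin d → ℤ) → ℝ) {i : ℕ}
    (hi : i ≤ 7) : ∑ y ∈ LambdaSet L d, weight p y * |wcoef V i y| = 1 := by
  simp only [wcoef, if_pos hi, apply_ite abs, abs_one, abs_zero]
  exact sum_weight_mul_ite_eq_zero hL p 1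

lemma sum_weight_mul_abs_wcoef_of_seven_lt (p : ℝ) (V : (Fin d → ℤ) → ℝ) {i : ℕ} (hi : 7 < i) :
    ∑ y ∈ LambdaSet L d, weight p y * |wcoef V i y| = ∑ y ∈ LambdaSet L d, weight p y * |V y| := by
  simp only [wcoef, if_neg (by omega : ¬i ≤ 7)]

lemma sum_sum_rpow_prod_reg_mul_mul (p : ℝ) (a b : (Fin d → ℤ) → ℝ) :
    ∑ y ∈ LambdaSet L d, ∑ y' ∈ LambdaSet L d,
        (∏ j, reg (y j : ℝ) * reg (y' j : ℝ)) ^ p * a y * b y' =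
      (∑ y ∈ LambdaSet L d, weight p y * a y) * ∑ y' ∈ LambdaSet L d, weight p y' * b y' := by
  rw [sum_mul_sum]
  exact sum_congr rfl fun y _ => sum_congr rfl fun y' _ => by rw [rpow_prod_reg_mul_reg]; ring

end Coefficients

theorem interaction_coefficient_bound_general
    (d L : ℕ) (hL : 2 ≤ L) (θ : ℝ) (hθ : θ = 1 ∨ θ = -1)
    (V : (Fin d → ℤ) → ℝ)
    (p : ℝ) (hp : 0 ≤ p) (i : ℕ) :
    ∑ y ∈ LambdaSet L d, ∑ y' ∈ LambdaSet L d,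
      (∏ j, reg (y j : ℝ) * reg (y' j : ℝ)) ^ p *
        sSup { v : ℝ | ∃ m ∈ LambdaSet L d, v = |vcoef L d θ V i (dpt L m) y| } *
        |wcoef V i y'| ≤
      ((2:ℝ)^(p*(d:ℝ)) + 3) * (sobolevNorm L d p (VhatC L d V))^2 := by
  have hL0 : 0 < L := by omega
  have : NeZero L := ⟨hL0.ne'⟩
  have hθ1 : |θ| ≤ 1 := by rcases hθ with rfl | rfl <;> norm_num
  refine (sum_sum_rpow_prod_reg_mul_mul p (fun y => dualSupNorm L d fun k => vcoef L d θ V i k y)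
    (fun y' => |wcoef V i y'|)).trans_le ?_
  rw [sobolevNorm_VhatC]
  set S := ∑ y ∈ LambdaSet L d, weight p y * |V y|
  have hNS : ∑ z ∈ LambdaSet L d, |V z| ≤ S := sum_abs_le_sum_weight_mul_abs hp V
  have hN : 0 ≤ ∑ z ∈ LambdaSet L d, |V z| := sum_nonneg fun _ _ => abs_nonneg _
  have hpow : 0 ≤ (2 : ℝ) ^ (p * d) := by positivity
  rcases le_or_gt i 7 with hi | hi
  · rw [sum_weight_mul_abs_wcoef_of_le_seven hL0 p V hi, mul_one]
    calc _ ≤ _ := sum_weight_mul_dualSupNorm_vcoef_le_of_le_seven hL0 hp hθ1 V hi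
      _ ≤ _ := by nlinarith
  · rw [sum_weight_mul_abs_wcoef_of_seven_lt p V hi]
    calc _ ≤ 2 * S * S := mul_le_mul_of_nonneg_right
          (sum_weight_mul_dualSupNorm_vcoef_le_of_seven_lt hL0 θ V hi) (hN.trans hNS)
      _ ≤ _ := by nlinarith

theorem interaction_coefficient_bound
    (d L : ℕ) (hd : 1 ≤ d) (hL : 2 ≤ L) (θ : ℝ) (hθ : θ = 1 ∨ θ = -1)
    (V : (Fin d → ℤ) → ℝ)
    (hV : ∀ y ∈ LambdaSet L d, V (cmodVec L (fun i => -(y i))) = V y)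
    (p : ℝ) (hp : 0 ≤ p) (i : ℕ) (hi : 1 ≤ i ∧ i ≤ 8) :
    ∑ y ∈ LambdaSet L d, ∑ y' ∈ LambdaSet L d,
      (∏ j, reg (y j : ℝ) * reg (y' j : ℝ)) ^ p *
        sSup { v : ℝ | ∃ m ∈ LambdaSet L d, v = |vcoef L d θ V i (dpt L m) y| } *
        |wcoef V i y'| ≤
      ((2:ℝ)^(p*(d:ℝ)) + 3) * (sobolevNorm L d p (VhatC L d V))^2 :=
  interaction_coefficient_bound_general d L hL θ hθ V p hp i

end KWP
end
end

section
/- (Lemma 5.5, singular integral bound) Let β ∈ (0,1). Then for all s > 0 and r ≥ 0: ∫₀^{1/2} dk |r − s·sin(πk)|^{−(1−β)/2} ≤ (1 + 2/(πβ)) · s^{−(1−β)/2}. -/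
/-! Let `t ∈ [0, 1/2]` be the point where `s sin (π t)` reaches `r` (`t = 1/2` if `r ≥ s`).
Concavity of `sin` on `[0, π/2]` gives `sin (π b) - sin (π a) ≥ 4 (b - a) (1/2 - a)` for
`0 ≤ a ≤ b ≤ 1/2`, hence `|r - s sin (π k)| ≥ 4 s (t - k)²` for `k ≤ t` and
`|r - s sin (π k)| ≥ 4 s (1/2 - t) (k - t)` for `k ≥ t`. After raising to the power `-(1-β)/2`
both are integrable power singularities, contributing at most `2/(πβ) s^(-(1-β)/2)` and
`s^(-(1-β)/2)` respectively. -/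

open MeasureTheory Set Real

lemma IntervalIntegrable.of_nonneg_of_le_Ioo {f g : ℝ → ℝ} {a b : ℝ} (hab : a ≤ b)
    (hf : Measurable f) (hg : IntervalIntegrable g volume a b)
    (hf0 : ∀ x ∈ Ioo a b, 0 ≤ f x) (hfg : ∀ x ∈ Ioo a b, f x ≤ g x) :
    IntervalIntegrable f volume a b := by
  refine hg.mono_fun' hf.aestronglyMeasurable ?_
  rw [uIoc_of_le hab, Measure.restrict_congr_set Ioo_ae_eq_Ioc.symm]
  filter_upwards [ae_restrict_mem measurableSet_Ioo] with x hx
  rw [Real.norm_of_nonneg (hf0 x hx)]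
  exact hfg x hx

lemma rpow_neg_le_of_mul_rpow_le {c d p q y : ℝ} (hc : 0 < c) (hd : 0 < d) (hq : 0 ≤ q)
    (h : c * d ^ p ≤ y) : y ^ (-q) ≤ c ^ (-q) * d ^ (-(p * q)) := by
  calc y ^ (-q) ≤ (c * d ^ p) ^ (-q) := rpow_le_rpow_of_nonpos (by positivity) h (by linarith)
    _ = c ^ (-q) * d ^ (-(p * q)) := by
      rw [mul_rpow hc.le (by positivity), ← rpow_mul hd.le, mul_neg]

lemma integral_abs_rpow_neg_le {φ d : ℝ → ℝ} {a b c p q : ℝ} (hφ : Measurable φ) (hab : a ≤ b)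
    (hc : 0 < c) (hq : 0 ≤ q) (hd : ∀ x ∈ Ioo a b, 0 < d x)
    (hd_int : IntervalIntegrable (fun x => d x ^ (-(p * q))) volume a b)
    (h : ∀ x ∈ Ioo a b, c * d x ^ p ≤ |φ x|) :
    IntervalIntegrable (fun x => |φ x| ^ (-q)) volume a b ∧
      ∫ x in a..b, |φ x| ^ (-q) ≤ c ^ (-q) * ∫ x in a..b, d x ^ (-(p * q)) := by
  have hle : ∀ x ∈ Ioo a b, |φ x| ^ (-q) ≤ c ^ (-q) * d x ^ (-(p * q)) := fun x hx =>
    rpow_neg_le_of_mul_rpow_le hc (hd x hx) hq (h x hx)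
  have hint : IntervalIntegrable (fun x => |φ x| ^ (-q)) volume a b :=
    .of_nonneg_of_le_Ioo hab (by fun_prop) (hd_int.const_mul _)
      (fun x _ => rpow_nonneg (abs_nonneg _) _) hle
  refine ⟨hint, ?_⟩
  rw [← intervalIntegral.integral_const_mul]
  exact intervalIntegral.integral_mono_on_of_le_Ioo hab hint (hd_int.const_mul _) hle

lemma intervalIntegrable_sub_rpow {a b r : ℝ} (hr : -1 < r) :
    IntervalIntegrable (fun x => (x - a) ^ r) volume a b := by
  simpa using (intervalIntegral.intervalIntegrable_rpow' (a := 0) (b := b - a) hr).comp_sub_right a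

lemma intervalIntegrable_rpow_sub {a b r : ℝ} (hr : -1 < r) :
    IntervalIntegrable (fun x => (b - x) ^ r) volume a b := by
  simpa using
    ((intervalIntegral.intervalIntegrable_rpow' (a := 0) (b := b - a) hr).comp_sub_left b).symm

lemma integral_sub_rpow {a b r : ℝ} (hr : -1 < r) :
    ∫ x in a..b, (x - a) ^ r = (b - a) ^ (r + 1) / (r + 1) := by
  rw [intervalIntegral.integral_comp_sub_right (fun x => x ^ r), sub_self,
    integral_rpow (Or.inl hr), zero_rpow (by linarith), sub_zero]

lemma integral_rpow_sub {a b r : ℝ} (hr : -1 < r) :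
    ∫ x in a..b, (b - x) ^ r = (b - a) ^ (r + 1) / (r + 1) := by
  rw [intervalIntegral.integral_comp_sub_left (fun x => x ^ r), sub_self,
    integral_rpow (Or.inl hr), zero_rpow (by linarith), sub_zero]

lemma sqrt_two_mul_le_sin_pi_mul_div_two {d : ℝ} (h0 : 0 ≤ d) (h1 : d ≤ 1 / 2) :
    √2 * d ≤ sin (π * d / 2) := by
  have h := strictConcaveOn_sin_Icc.concaveOn.2 (x := 0) (y := π / 4)
    ⟨le_rfl, pi_pos.le⟩ ⟨by positivity, by linarith [pi_pos]⟩
    (show 0 ≤ 1 - 2 * d by linarith) (show 0 ≤ 2 * d by linarith) (by ring)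
  simp only [smul_eq_mul, mul_zero, sin_zero, sin_pi_div_four, zero_add] at h
  rw [show π * d / 2 = 2 * d * (π / 4) by ring]
  linarith

lemma four_mul_le_sin_pi_mul_sub_sin_pi_mul {a b : ℝ} (ha : 0 ≤ a) (hab : a ≤ b) (hb : b ≤ 1 / 2) :
    4 * (b - a) * (1 / 2 - a) ≤ sin (π * b) - sin (π * a) := by
  have hπ := pi_pos
  have hsin : √2 * (b - a) ≤ sin ((π * b - π * a) / 2) := by
    convert sqrt_two_mul_le_sin_pi_mul_div_two (d := b - a) (by linarith) (by linarith) using 2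
    ring
  -- `cos` of the midpoint is `sin` of its distance to `π / 2`, which is at least `π (1/2 - a) / 2`
  have hcos : √2 * (1 / 2 - a) ≤ cos ((π * b + π * a) / 2) := by
    refine (sqrt_two_mul_le_sin_pi_mul_div_two (by linarith) (by linarith)).trans ?_
    rw [← sin_pi_div_two_sub]
    exact strictMonoOn_sin.monotoneOn ⟨by nlinarith, by nlinarith⟩ ⟨by nlinarith, by nlinarith⟩
      (by nlinarith)
  have hsq : √2 * √2 = 2 := mul_self_sqrt zero_le_two
  rw [sin_sub_sin]
  calc 4 * (b - a) * (1 / 2 - a) = 2 * (√2 * (b - a)) * (√2 * (1 / 2 - a)) := by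
        linear_combination (-2 * (b - a) * (1 / 2 - a)) * hsq
    _ ≤ _ := by
        have hba : 0 ≤ √2 * (b - a) := mul_nonneg (sqrt_nonneg 2) (by linarith)
        have hha : 0 ≤ √2 * (1 / 2 - a) := mul_nonneg (sqrt_nonneg 2) (by linarith)
        exact mul_le_mul (by linarith) hcos hha (by linarith)

lemma four_rpow_mul_rpow_le_half {β y : ℝ} (hβ : 0 ≤ β) (hy0 : 0 ≤ y) (hy : y ≤ 1 / 2) :
    (4 : ℝ) ^ (-((1 - β) / 2)) * y ^ β ≤ 1 / 2 := by
  have h4 : (4 : ℝ) ^ (-((1 - β) / 2)) = 2 ^ (β - 1) := by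
    rw [show (4 : ℝ) = 2 ^ (2 : ℝ) by norm_num, ← rpow_mul zero_le_two]
    ring_nf
  calc (4 : ℝ) ^ (-((1 - β) / 2)) * y ^ β ≤ 2 ^ (β - 1) * (1 / 2) ^ β := by
        rw [h4]; gcongr
    _ = 1 / 2 := by
        rw [div_rpow zero_le_one zero_le_two, one_rpow, rpow_sub two_pos, rpow_one]
        field_simp

noncomputable section

namespace KWP

open MeasureTheory Classical

lemma integral_abs_sub_sin_rpow_le_left {β s r t : ℝ} (hβ0 : 0 < β) (hβ1 : β ≤ 1) (hs : 0 < s)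
    (ht0 : 0 ≤ t) (ht : t ≤ 1 / 2) (hrt : s * sin (π * t) ≤ r) :
    IntervalIntegrable (fun k => |r - s * sin (π * k)| ^ (-((1 - β) / 2))) volume 0 t ∧
      ∫ k in 0..t, |r - s * sin (π * k)| ^ (-((1 - β) / 2)) ≤
        2 / (π * β) * s ^ (-((1 - β) / 2)) := by
  have hlow : ∀ k ∈ Ioo 0 t, 4 * s * (t - k) ^ (2 : ℝ) ≤ |r - s * sin (π * k)| := by
    rintro k ⟨hk0, hkt⟩
    have hsin := four_mul_le_sin_pi_mul_sub_sin_pi_mul hk0.le hkt.le ht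
    rw [rpow_two]
    calc 4 * s * (t - k) ^ 2 ≤ s * (4 * (t - k) * (1 / 2 - k)) := by
          nlinarith [mul_nonneg (mul_nonneg hs.le (sub_nonneg.2 hkt.le)) (sub_nonneg.2 ht)]
      _ ≤ s * (sin (π * t) - sin (π * k)) := by gcongr
      _ ≤ |r - s * sin (π * k)| := by linarith [le_abs_self (r - s * sin (π * k))]
  have hexp : -(2 * ((1 - β) / 2)) = β - 1 := by ring
  obtain ⟨hint, hle⟩ := integral_abs_rpow_neg_le (c := 4 * s) (d := fun k => t - k) (p := 2)
    (q := (1 - β) / 2) (by fun_prop) ht0 (by positivity) (by linarith) (fun k hk => sub_pos.2 hk.2)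
    (by rw [hexp]; exact intervalIntegrable_rpow_sub (by linarith)) hlow
  refine ⟨hint, hle.trans ?_⟩
  rw [hexp, integral_rpow_sub (by linarith), sub_zero, sub_add_cancel,
    mul_rpow zero_le_four hs.le]
  have h4 := four_rpow_mul_rpow_le_half hβ0.le ht0 ht
  have hπ : 1 / 2 ≤ 2 / π := by
    rw [div_le_div_iff₀ two_pos pi_pos]; linarith [pi_le_four]
  calc 4 ^ (-((1 - β) / 2)) * s ^ (-((1 - β) / 2)) * (t ^ β / β)
        = 4 ^ (-((1 - β) / 2)) * t ^ β * s ^ (-((1 - β) / 2)) / β := by ring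
    _ ≤ 2 / π * s ^ (-((1 - β) / 2)) / β := by gcongr; linarith
    _ = 2 / (π * β) * s ^ (-((1 - β) / 2)) := by ring

lemma integral_abs_sub_sin_rpow_le_right {β s r t : ℝ} (hβ0 : 0 ≤ β) (hβ1 : β ≤ 1) (hs : 0 < s)
    (ht0 : 0 ≤ t) (ht : t < 1 / 2) (hrt : s * sin (π * t) = r) :
    IntervalIntegrable (fun k => |r - s * sin (π * k)| ^ (-((1 - β) / 2))) volume t (1 / 2) ∧
      ∫ k in t..1 / 2, |r - s * sin (π * k)| ^ (-((1 - β) / 2)) ≤ s ^ (-((1 - β) / 2)) := by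
  set q := (1 - β) / 2 with hq
  set y := 1 / 2 - t with hy
  have hy0 : 0 < y := by linarith
  have hlow : ∀ k ∈ Ioo t (1 / 2), 4 * s * y * (k - t) ^ (1 : ℝ) ≤ |r - s * sin (π * k)| := by
    rintro k ⟨hkt, hk⟩
    have hsin := four_mul_le_sin_pi_mul_sub_sin_pi_mul ht0 hkt.le hk.le
    rw [rpow_one]
    calc 4 * s * y * (k - t) = s * (4 * (k - t) * (1 / 2 - t)) := by ring
      _ ≤ s * (sin (π * k) - sin (π * t)) := by gcongr
      _ ≤ |r - s * sin (π * k)| := by linarith [neg_abs_le (r - s * sin (π * k))]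
  obtain ⟨hint, hle⟩ := integral_abs_rpow_neg_le (c := 4 * s * y) (d := fun k => k - t) (p := 1)
    (q := q) (by fun_prop) ht.le (by positivity) (by linarith) (fun k hk => sub_pos.2 hk.1)
    (intervalIntegrable_sub_rpow (by linarith)) hlow
  refine ⟨hint, hle.trans ?_⟩
  rw [integral_sub_rpow (by linarith), ← hy, one_mul, mul_rpow (by positivity) hy0.le,
    mul_rpow zero_le_four hs.le]
  have hyβ : y ^ (-q) * y ^ (-q + 1) = y ^ β := by
    rw [← rpow_add hy0]; congr 1; ring
  have h4 := four_rpow_mul_rpow_le_half hβ0 hy0.le (by linarith)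
  have hq1 : 1 / 2 ≤ -q + 1 := by linarith
  calc 4 ^ (-q) * s ^ (-q) * y ^ (-q) * (y ^ (-q + 1) / (-q + 1))
        = 4 ^ (-q) * (y ^ (-q) * y ^ (-q + 1)) * s ^ (-q) / (-q + 1) := by ring
    _ ≤ 1 / 2 * s ^ (-q) / (1 / 2) := by rw [hyβ]; gcongr
    _ = s ^ (-q) := by ring

lemma exists_mem_Ico_sin_pi_mul_eq {x : ℝ} (hx0 : 0 ≤ x) (hx1 : x < 1) :
    ∃ t ∈ Ico (0 : ℝ) (1 / 2), sin (π * t) = x := by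
  refine ⟨arcsin x / π, ⟨div_nonneg (arcsin_nonneg.2 hx0) pi_pos.le, ?_⟩, ?_⟩
  · rw [div_lt_iff₀ pi_pos]
    linarith [arcsin_lt_pi_div_two.2 hx1]
  · rw [mul_div_cancel₀ _ pi_ne_zero, sin_arcsin (by linarith) hx1.le]

theorem singular_integral_bound (β : ℝ) (hβ : 0 < β ∧ β < 1)
    (s r : ℝ) (hs : 0 < s) (hr : 0 ≤ r) :
    (∫ k in (0:ℝ)..(1/2), |r - s * Real.sin (Real.pi * k)| ^ (-((1-β)/2))) ≤
      (1 + 2/(Real.pi*β)) * s ^ (-((1-β)/2)) := by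
  obtain ⟨hβ0, hβ1⟩ := hβ
  have hpow : 0 ≤ s ^ (-((1 - β) / 2)) := rpow_nonneg hs.le _
  rcases lt_or_ge r s with hrs | hsr
  · obtain ⟨t, ⟨ht0, ht⟩, hsin⟩ :=
      exists_mem_Ico_sin_pi_mul_eq (div_nonneg hr hs.le) ((div_lt_one hs).2 hrs)
    rw [eq_div_iff hs.ne', mul_comm] at hsin
    obtain ⟨hint₁, hle₁⟩ :=
      integral_abs_sub_sin_rpow_le_left hβ0 hβ1.le hs ht0 ht.le hsin.le
    obtain ⟨hint₂, hle₂⟩ := integral_abs_sub_sin_rpow_le_right hβ0.le hβ1.le hs ht0 ht hsin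
    rw [← intervalIntegral.integral_add_adjacent_intervals hint₁ hint₂]
    linarith
  · have hsin : s * sin (π * (1 / 2)) ≤ r := by rwa [mul_one_div, sin_pi_div_two, mul_one]
    have hle := (integral_abs_sub_sin_rpow_le_left hβ0 hβ1.le hs (by norm_num) le_rfl hsin).2
    linarith

end KWP
end
end

section
/- (Quadratic integral inequality, proved within Proposition 6.2) Let a ≥ 0 and c > 0, and let S satisfy 0 ≤ S ≤ 1/(c·a) (with 1/(c·a) interpreted as +∞ when a = 0). Suppose h : [0,S] → ℝ is continuous, h(0) = 0, and h(s) ≤ a·s + (c/4)·h(s)² for all s ∈ [0,S]. Then h(s) ≤ (2/c)·(1 − √(1 − c·a·s)) for all s ∈ [0,S]. -/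
/-! The roots `(2/c)(1 ∓ √(1 - cas))` of `(c/4)x² - x + as` are symmetric about `2/c`, and below `2/c`
the quadratic inequality already forces the lower root, so it suffices to show `h ≤ 2/c`. If `h`
exceeded `2/c` at some time, by the intermediate value theorem it would take the value `2/c` at an
earlier time `x`; there the quadratic inequality reads `1 ≤ cax`, impossible before `1/(ca)`. -/

namespace KWP

theorem le_two_div_mul_one_sub_sqrt {b c x : ℝ} (hc : 0 < c) (hx : x ≤ 2 / c)
    (hquad : x ≤ b + c / 4 * x ^ 2) : x ≤ 2 / c * (1 - √(1 - c * b)) := by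
  have hnonneg : 0 ≤ 1 - c / 2 * x := by
    rw [le_div_iff₀ hc] at hx
    linarith
  -- `1 - cb ≤ (1 - cx/2)²` is the quadratic inequality multiplied by `c`.
  have hsqrt : √(1 - c * b) ≤ 1 - c / 2 * x :=
    Real.sqrt_le_iff.mpr ⟨hnonneg, by nlinarith⟩
  rw [div_mul_eq_mul_div, le_div_iff₀ hc]
  linarith

theorem mul_mul_lt_one_of_lt_of_le_one_div {a c S x : ℝ} (ha : 0 ≤ a) (hc : 0 < c)
    (hS : a = 0 ∨ S ≤ 1 / (c * a)) (hx : x < S) : c * a * x < 1 := by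
  rcases ha.eq_or_lt with rfl | ha
  · simp
  have hca : 0 < c * a := mul_pos hc ha
  calc c * a * x < c * a * S := mul_lt_mul_of_pos_left hx hca
    _ ≤ 1 := (le_div_iff₀' hca).mp (hS.resolve_left ha.ne')

theorem one_le_mul_mul_of_two_div_le {a c x : ℝ} (hc : 0 < c)
    (hquad : 2 / c ≤ a * x + c / 4 * (2 / c) ^ 2) : 1 ≤ c * a * x := by
  have hsq : c / 4 * (2 / c) ^ 2 = 1 / c := by
    field_simp
    ring
  rw [hsq, ← sub_le_iff_le_add, ← sub_div, div_le_iff₀' hc] at hquad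
  linarith

theorem quadratic_integral_inequality_general (a c : ℝ) (ha : 0 ≤ a) (hc : 0 < c)
    (S : ℝ) (hS : a = 0 ∨ S ≤ 1/(c*a))
    (h : ℝ → ℝ) (hcont : ContinuousOn h (Set.Icc 0 S)) (h0 : h 0 = 0)
    (hineq : ∀ s ∈ Set.Icc (0:ℝ) S, h s ≤ a*s + (c/4)*(h s)^2) :
    ∀ s ∈ Set.Icc (0:ℝ) S, h s ≤ (2/c)*(1 - Real.sqrt (1 - c*a*s)) := by
  intro s hs
  suffices hle : h s ≤ 2 / c by
    rw [mul_assoc]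
    exact le_two_div_mul_one_sub_sqrt hc hle (hineq s hs)
  by_contra! hlt
  have hsub : Set.Icc 0 s ⊆ Set.Icc 0 S := Set.Icc_subset_Icc_right hs.2
  obtain ⟨x, hx, hx_eq⟩ : 2 / c ∈ h '' Set.Ico 0 s :=
    intermediate_value_Ico hs.1 (hcont.mono hsub) ⟨by rw [h0]; positivity, hlt⟩
  have hquad := hineq x (hsub (Set.Ico_subset_Icc_self hx))
  rw [hx_eq] at hquad
  exact (mul_mul_lt_one_of_lt_of_le_one_div ha hc hS (hx.2.trans_le hs.2)).not_ge
    (one_le_mul_mul_of_two_div_le hc hquad)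

theorem quadratic_integral_inequality (a c : ℝ) (ha : 0 ≤ a) (hc : 0 < c)
    (S : ℝ) (hS0 : 0 ≤ S) (hS : a = 0 ∨ S ≤ 1/(c*a))
    (h : ℝ → ℝ) (hcont : ContinuousOn h (Set.Icc 0 S)) (h0 : h 0 = 0)
    (hineq : ∀ s ∈ Set.Icc (0:ℝ) S, h s ≤ a*s + (c/4)*(h s)^2) :
    ∀ s ∈ Set.Icc (0:ℝ) S, h s ≤ (2/c)*(1 - Real.sqrt (1 - c*a*s)) :=
  quadratic_integral_inequality_general a c ha hc S hS h hcont h0 hineq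

end KWP
end
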